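/- arXiv:2111.08586 — 4 statements merged into one kernel-verified Lean document; each statement's English description precedes it below -/
import Mathlib

section
/- For any subset B in S_D (where S_D is defined inductively: S_0 = {∅}, S_1 = {∅, {[1,1]}}, and for D ≥ 2, B ∈ S_D iff B = ∅ or B = t_i(B') for some i ∈ [1,D] and B' ∈ S_{D-2}), any two intervals I, Ĩ in B satisfy: either I = Ĩ, or I and Ĩ are non-touching (separated by a gap of at least 2), or I is strictly nested inside Ĩ, or Ĩ is strictly nested inside I. -/
open Finset

abbrev Vec := ℕ →₀ ZMod 2

/-- The basis vector `e_i`. -/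
noncomputable def e (i : ℕ) : Vec := Finsupp.single i 1

/-- For an interval `p = (a,b)` (representing `[a,b]`), the vector `e_I = ∑_{i∈[a,b]} e_i`. -/
noncomputable def eI (p : ℕ × ℕ) : Vec := ∑ j ∈ Finset.Icc p.1 p.2, e j

/-- The map `ξ_i` on intervals. -/
def tint (i : ℕ) (p : ℕ × ℕ) : ℕ × ℕ :=
  if i ≤ p.1 then (p.1 + 2, p.2 + 2)
  else if p.2 + 2 ≤ i then p
  else (p.1, p.2 + 2)

/-- The map `t_i` on sets of intervals: `t_i(B') = ξ_i(B') ∪ {[i,i]}`. -/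
def tmap (i : ℕ) (B : Finset (ℕ × ℕ)) : Finset (ℕ × ℕ) :=
  B.image (tint i) ∪ {(i, i)}

/-- The inductively defined family `S_D`. -/
inductive IsS : ℕ → Finset (ℕ × ℕ) → Prop
  | empty (D : ℕ) : IsS D ∅
  | one : IsS 1 {(1, 1)}
  | step (D i : ℕ) (B' : Finset (ℕ × ℕ)) (h1 : 1 ≤ i) (h2 : i ≤ D + 2)
      (h : IsS D B') : IsS (D + 2) (tmap i B')

def primEven (D k : ℕ) : Finset (ℕ × ℕ) := (Finset.Icc 1 k).image fun j => (j, D + 1 - j)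
def primOddA (D k : ℕ) : Finset (ℕ × ℕ) := (Finset.Icc 1 k).image fun j => (j, D - j)
def primOddB (D k : ℕ) : Finset (ℕ × ℕ) := (Finset.Icc 1 k).image fun j => (j + 1, D + 1 - j)

/-- The primitive elements of `𝕊_D`. -/
def IsPrim (D : ℕ) (B : Finset (ℕ × ℕ)) : Prop :=
  B = ∅ ∨
  (Even D ∧ ∃ k, 1 ≤ k ∧ k ≤ D / 2 ∧ B = primEven D k) ∨
  (Odd D ∧ ∃ k, Odd k ∧ 1 ≤ k ∧ k ≤ (D - 1) / 2 ∧ (B = primOddA D k ∨ B = primOddB D k))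

/-- The inductively defined family `𝕊_D`. -/
inductive IsSS : ℕ → Finset (ℕ × ℕ) → Prop
  | prim (D : ℕ) (B : Finset (ℕ × ℕ)) : IsPrim D B → IsSS D B
  | one : IsSS 1 {(1, 1)}
  | step (D i : ℕ) (B' : Finset (ℕ × ℕ)) (h1 : 1 ≤ i) (h2 : i ≤ D + 2)
      (h : IsSS D B') : IsSS (D + 2) (tmap i B')

/-- The subspace `𝔼_B` spanned by the `e_I`, `I ∈ B`. -/
noncomputable def EB (B : Finset (ℕ × ℕ)) : Submodule (ZMod 2) Vec :=
  Submodule.span (ZMod 2) (eI '' (B : Set (ℕ × ℕ)))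

/-- Two intervals are non-touching. -/
def Nontouch (p q : ℕ × ℕ) : Prop := p.2 + 2 ≤ q.1 ∨ q.2 + 2 ≤ p.1

/-- `p ≺ q`: `p = [a,b]` is strictly nested inside `q = [a',b']`, i.e. `a' < a ≤ b < b'`. -/
def Nested (p q : ℕ × ℕ) : Prop := q.1 < p.1 ∧ p.1 ≤ p.2 ∧ p.2 < q.2

/-- `η_D = e_1 + e_3 + ⋯ + e_D` (`D` odd). -/
noncomputable def eta (D : ℕ) : Vec := ∑ j ∈ (Finset.Icc 1 D).filter (fun j => j % 2 = 1), e j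

noncomputable def Tfun (i k : ℕ) : Vec :=
  if k + 1 < i then e k
  else if k + 1 = i then e k + e (k + 1) + e (k + 2)
  else e (k + 2)

/-- The linear map `T_i : V_{D-2} → V_D`. -/
noncomputable def Tlin (i : ℕ) : Vec →ₗ[ZMod 2] Vec :=
  Finsupp.linearCombination (ZMod 2) (Tfun i)

/-- The inductively defined family `𝒻(V_D)` of subspaces. -/
inductive IsF : ℕ → Submodule (ZMod 2) Vec → Prop
  | zero (D : ℕ) : IsF D ⊥
  | one : IsF 1 (Submodule.span (ZMod 2) {e 1})
  | step (D i : ℕ) (E' : Submodule (ZMod 2) Vec) (h1 : 1 ≤ i) (h2 : i ≤ D + 2)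
      (h : IsF D E') :
      IsF (D + 2) (Submodule.map (Tlin i) E' ⊔ Submodule.span (ZMod 2) {e i})

/-- The subspace `V_D = ⟨e_1,…,e_D⟩`. -/
noncomputable def VD (D : ℕ) : Submodule (ZMod 2) Vec :=
  Submodule.span (ZMod 2) (e '' Set.Icc 1 D)

/-- The symplectic form with `(e_i,e_j) = 1` iff `|i-j| = 1`. -/
noncomputable def symp (x y : Vec) : ZMod 2 :=
  x.sum fun i xi => xi * (y (i + 1) + if 1 ≤ i then y (i - 1) else 0)


def Laminar (p q : ℕ × ℕ) : Prop := p = q ∨ Nontouch p q ∨ Nested p q ∨ Nested q p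

lemma Laminar.symm {p q : ℕ × ℕ} (h : Laminar p q) : Laminar q p := by
  unfold Laminar Nontouch at *
  tauto

lemma tint_fst_le_snd (i : ℕ) {p : ℕ × ℕ} (hp : p.1 ≤ p.2) : (tint i p).1 ≤ (tint i p).2 := by
  obtain ⟨a, b⟩ := p
  simp only [tint] at *
  split_ifs <;> simp only <;> omega

lemma Laminar.map_tint (i : ℕ) {p q : ℕ × ℕ} (hp : p.1 ≤ p.2) (hq : q.1 ≤ q.2) (h : Laminar p q) :
    Laminar (tint i p) (tint i q) := by
  obtain ⟨a, b⟩ := p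
  obtain ⟨c, d⟩ := q
  simp only [Laminar, tint, Nontouch, Nested, Prod.ext_iff] at *
  split_ifs <;> simp only at * <;> omega

/-- `ξ_i` moves an interval to `≥ i + 2` or leaves it `≤ i - 2`, or else stretches it over
`[i - 1, i + 1]`, so `[i, i]` is non-touching with or strictly nested in the image. -/
lemma laminar_singleton_tint (i : ℕ) (p : ℕ × ℕ) :
    Laminar (i, i) (tint i p) := by
  obtain ⟨a, b⟩ := p
  simp only [Laminar, tint, Nontouch, Nested, Prod.ext_iff]
  split_ifs <;> simp only <;> omega

lemma IsS.fst_le_snd {D : ℕ} {B : Finset (ℕ × ℕ)} (hB : IsS D B) : ∀ p ∈ B, p.1 ≤ p.2 := by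
  induction hB with
  | empty D => simp
  | one => simp
  | step D i B' _ _ _ ih =>
    simp only [tmap, mem_union, mem_image, mem_singleton]
    rintro _ (⟨p, hp, rfl⟩ | rfl)
    · exact tint_fst_le_snd i (ih p hp)
    · exact le_rfl

lemma IsS.laminar {D : ℕ} {B : Finset (ℕ × ℕ)} (hB : IsS D B) :
    ∀ p ∈ B, ∀ q ∈ B, Laminar p q := by
  induction hB with
  | empty D => simp
  | one => simp [Laminar]
  | step D i B' _ _ hB' ih =>
    have hle := hB'.fst_le_snd
    simp only [tmap, mem_union, mem_image, mem_singleton]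
    rintro _ (⟨p, hp, rfl⟩ | rfl) _ (⟨q, hq, rfl⟩ | rfl)
    · exact (ih p hp q hq).map_tint i (hle p hp) (hle q hq)
    · exact (laminar_singleton_tint i p).symm
    · exact laminar_singleton_tint i q
    · exact Or.inl rfl

/-- any two intervals of `B ∈ S_D` are equal, non-touching, or strictly nested. -/
theorem stmt0 (D : ℕ) (B : Finset (ℕ × ℕ)) (hB : IsS D B)
    (p q : ℕ × ℕ) (hp : p ∈ B) (hq : q ∈ B) :
    p = q ∨ Nontouch p q ∨ Nested p q ∨ Nested q p :=
  hB.laminar p hp q hq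
end

section
/- For any B ∈ S_D, the cardinality of B equals Σ_{i=1}^{s} (c_i + 2)/2, where the union of all intervals in B decomposes uniquely as a disjoint union [a_1,b_1] ∪ ... ∪ [a_s,b_s] of maximal intervals (with a_{i+1} ≥ b_i + 2) each belonging to B, and c_i = b_i − a_i. -/
/-!
Thicken every interval `[a, b]` to `[a, b + 1]`. On thickened intervals `ξ_i` acts as the map
`x ↦ if x < i then x else x + 2`, which opens a gap `{i, i + 1}`, except that an interval
straddling `i` also absorbs the gap; and the new interval `[i, i]` thickens to exactly that gap.
So under `t_i` the union of the thickened intervals gains exactly two points while `B` gains one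
interval, whence `2 |B|` is the size of that union. For `B ∈ S_D` the union is the disjoint union
of the thickened maximal intervals `[a_j, b_j + 1]`, of the even sizes `c_j + 2`.
-/

open Finset

def shiftFrom (i x : ℕ) : ℕ := if x < i then x else x + 2

def thickInterval (p : ℕ × ℕ) : Finset ℕ := Ico p.1 (p.2 + 2)

def thickUnion (B : Finset (ℕ × ℕ)) : Finset ℕ := B.biUnion thickInterval

def thicken (σ : Finset ℕ) : Finset ℕ := σ ∪ σ.image (· + 1)

lemma shiftFrom_injective (i : ℕ) : Function.Injective (shiftFrom i) := by
  intro x y h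
  unfold shiftFrom at h
  split_ifs at h <;> omega

lemma shiftFrom_mem_thickInterval_tint {i x : ℕ} {p : ℕ × ℕ} (hx : x ∈ thickInterval p) :
    shiftFrom i x ∈ thickInterval (tint i p) := by
  simp only [thickInterval, mem_Ico, shiftFrom, tint] at hx ⊢
  split_ifs <;> omega

lemma mem_thickInterval_tint {i y : ℕ} {p : ℕ × ℕ} (hy : y ∈ thickInterval (tint i p)) :
    y = i ∨ y = i + 1 ∨ ∃ x ∈ thickInterval p, shiftFrom i x = y := by
  simp only [thickInterval, mem_Ico, shiftFrom, tint] at hy ⊢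
  by_cases hyi : y < i
  · exact Or.inr (Or.inr ⟨y, by split_ifs at hy <;> omega, if_pos hyi⟩)
  · by_cases hy2 : i + 2 ≤ y
    · refine Or.inr (Or.inr ⟨y - 2, by split_ifs at hy <;> omega, ?_⟩)
      rw [if_neg (by omega)]
      omega
    · omega

lemma thickUnion_tmap (i : ℕ) (B : Finset (ℕ × ℕ)) :
    thickUnion (tmap i B) = (thickUnion B).image (shiftFrom i) ∪ {i, i + 1} := by
  ext y
  simp only [thickUnion, tmap, mem_union, mem_biUnion, mem_image, mem_insert, mem_singleton]
  constructor
  · rintro ⟨q, ⟨p, hp, rfl⟩ | rfl, hy⟩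
    · rcases mem_thickInterval_tint hy with rfl | rfl | ⟨x, hx, rfl⟩
      · exact Or.inr (Or.inl rfl)
      · exact Or.inr (Or.inr rfl)
      · exact Or.inl ⟨x, ⟨p, hp, hx⟩, rfl⟩
    · simp only [thickInterval, mem_Ico] at hy
      omega
  · rintro (⟨x, ⟨p, hp, hx⟩, rfl⟩ | hy | hy)
    · exact ⟨tint i p, Or.inl ⟨p, hp, rfl⟩, shiftFrom_mem_thickInterval_tint hx⟩
    all_goals exact ⟨(i, i), Or.inr rfl, by simp only [thickInterval, mem_Ico]; omega⟩

lemma card_thickUnion_tmap (i : ℕ) (B : Finset (ℕ × ℕ)) :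
    (thickUnion (tmap i B)).card = (thickUnion B).card + 2 := by
  have hdisj : Disjoint ((thickUnion B).image (shiftFrom i)) {i, i + 1} := by
    simp only [disjoint_insert_right, disjoint_singleton_right, mem_image, shiftFrom]
    constructor <;> rintro ⟨x, -, hx⟩ <;> split_ifs at hx <;> omega
  rw [thickUnion_tmap, card_union_of_disjoint hdisj,
    card_image_of_injective _ (shiftFrom_injective i), card_pair (by omega)]

lemma card_tmap {i : ℕ} {B : Finset (ℕ × ℕ)} (hB : ∀ p ∈ B, p.1 ≤ p.2) :
    (tmap i B).card = B.card + 1 := by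
  have hinj : Set.InjOn (tint i) B := by
    rintro ⟨a, b⟩ hp ⟨a', b'⟩ hq h
    have := hB _ hp
    have := hB _ hq
    simp only [tint, Prod.ext_iff] at h this ⊢
    split_ifs at h <;> omega
  have hnew : (i, i) ∉ B.image (tint i) := by
    simp only [mem_image, tint, not_exists, not_and]
    intro p _ h
    split_ifs at h <;> simp only [Prod.ext_iff] at h <;> omega
  rw [tmap, card_union_of_disjoint (disjoint_singleton_right.2 hnew), card_image_of_injOn hinj,
    card_singleton]

lemma IsS.le_and_even_sub {D : ℕ} {B : Finset (ℕ × ℕ)} (hB : IsS D B) :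
    ∀ p ∈ B, p.1 ≤ p.2 ∧ Even (p.2 - p.1) := by
  induction hB with
  | empty => simp
  | one => simp
  | step D i B' _ _ _ ih =>
    simp only [tmap, mem_union, mem_image, mem_singleton]
    rintro p (⟨q, hq, rfl⟩ | rfl)
    · obtain ⟨hle, heven⟩ := ih q hq
      rw [even_iff_two_dvd] at heven ⊢
      simp only [tint]
      split_ifs <;> exact ⟨by omega, by omega⟩
    · simp

lemma IsS.two_mul_card {D : ℕ} {B : Finset (ℕ × ℕ)} (hB : IsS D B) :
    2 * B.card = (thickUnion B).card := by
  induction hB with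
  | empty => simp [thickUnion]
  | one => decide
  | step D i B' _ _ hB' ih =>
    rw [card_tmap fun p hp => (hB'.le_and_even_sub p hp).1, card_thickUnion_tmap]
    omega

lemma thicken_biUnion {ι : Type*} (s : Finset ι) (f : ι → Finset ℕ) :
    thicken (s.biUnion f) = s.biUnion fun j => thicken (f j) := by
  ext y
  simp only [thicken, mem_union, mem_biUnion, mem_image]
  aesop

lemma thicken_Icc {a b : ℕ} (h : a ≤ b) : thicken (Icc a b) = Ico a (b + 2) := by
  ext y
  simp only [thicken, mem_union, mem_image, mem_Icc, mem_Ico]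
  constructor
  · rintro (hy | ⟨x, hx, rfl⟩) <;> omega
  · intro hy
    by_cases hyb : y ≤ b
    · exact Or.inl ⟨hy.1, hyb⟩
    · exact Or.inr ⟨y - 1, by omega, by omega⟩

lemma thickUnion_eq_thicken {B : Finset (ℕ × ℕ)} (hB : ∀ p ∈ B, p.1 ≤ p.2) :
    thickUnion B = thicken (B.biUnion fun p => Icc p.1 p.2) := by
  rw [thicken_biUnion]
  exact biUnion_congr rfl fun p hp => (thicken_Icc (hB p hp)).symm

lemma chain_le_of_lt {s : ℕ} {a e : ℕ → ℕ} (hle : ∀ j ∈ Icc 1 s, a j ≤ e j)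
    (hgap : ∀ j, 1 ≤ j → j + 1 ≤ s → e j ≤ a (j + 1)) {j k : ℕ} (hj : 1 ≤ j)
    (hjk : j < k) (hk : k ≤ s) : e j ≤ a k := by
  induction k, hjk using Nat.le_induction with
  | base => exact hgap j hj hk
  | succ k hjk ih =>
    have := hle k (mem_Icc.2 ⟨by omega, by omega⟩)
    have := hgap k (by omega) hk
    have := ih (by omega)
    omega

lemma card_biUnion_Ico_of_chain {s : ℕ} {a e : ℕ → ℕ} (hle : ∀ j ∈ Icc 1 s, a j ≤ e j)
    (hgap : ∀ j, 1 ≤ j → j + 1 ≤ s → e j ≤ a (j + 1)) :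
    ((Icc 1 s).biUnion fun j => Ico (a j) (e j)).card = ∑ j ∈ Icc 1 s, (e j - a j) := by
  rw [card_biUnion]
  · simp only [Nat.card_Ico]
  · intro j hj k hk hjk
    simp only [coe_Icc, Set.mem_Icc] at hj hk
    rw [Function.onFun, disjoint_left]
    intro y hyj hyk
    rw [mem_Ico] at hyj hyk
    rcases lt_or_gt_of_ne hjk with h | h
    · have := chain_le_of_lt hle hgap hj.1 h hk.2
      omega
    · have := chain_le_of_lt hle hgap hk.1 h hj.2
      omega

/-- `|B| = Σ_{i=1}^s (c_i+2)/2` for the decomposition of `σ = ∪_{I∈B} I`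
into maximal intervals `[a_i,b_i] ∈ B` with `b_i + 2 ≤ a_{i+1}`. -/
theorem stmt4 (D : ℕ) (B : Finset (ℕ × ℕ)) (hB : IsS D B)
    (s : ℕ) (a b : ℕ → ℕ)
    (hmem : ∀ i, 1 ≤ i → i ≤ s → (a i, b i) ∈ B)
    (hgap : ∀ i, 1 ≤ i → i + 1 ≤ s → b i + 2 ≤ a (i + 1))
    (hcover : B.biUnion (fun p => Finset.Icc p.1 p.2)
      = (Finset.Icc 1 s).biUnion (fun i => Finset.Icc (a i) (b i))) :
    B.card = ∑ i ∈ Finset.Icc 1 s, (b i - a i + 2) / 2 := by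
  have hab : ∀ j ∈ Icc 1 s, a j ≤ b j ∧ Even (b j - a j) := fun j hj =>
    hB.le_and_even_sub _ (hmem j (mem_Icc.1 hj).1 (mem_Icc.1 hj).2)
  have hthick : thickUnion B = (Icc 1 s).biUnion fun j => Ico (a j) (b j + 2) := by
    rw [thickUnion_eq_thicken fun p hp => (hB.le_and_even_sub p hp).1, hcover, thicken_biUnion]
    exact biUnion_congr rfl fun j hj => thicken_Icc (hab j hj).1
  have hcard : 2 * B.card = ∑ j ∈ Icc 1 s, (b j - a j + 2) := by
    rw [hB.two_mul_card, hthick,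
      card_biUnion_Ico_of_chain (fun j hj => by have := (hab j hj).1; omega) hgap]
    exact sum_congr rfl fun j hj => by have := (hab j hj).1; omega
  have hhalf : ∑ j ∈ Icc 1 s, (b j - a j + 2) = 2 * ∑ j ∈ Icc 1 s, (b j - a j + 2) / 2 := by
    rw [mul_sum]
    exact sum_congr rfl fun j hj =>
      (Nat.two_mul_div_two_of_even ((hab j hj).2.add even_two)).symm
  omega
end

section
/- Let D be odd and B ∈ S_D with |B| = (D+1)/2. Then η_D = e_1 + e_3 + ... + e_D belongs to E = 𝔼_B. -/
/-!
Coordinatewise, `T_i` is the pullback along `m ↦ Tpre i m`, so it sends `e_I` to `e_{ξ_i(I)}` and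
`η_D` to `η_{D+2} + e_i`; hence `T_i(𝔼_{B'}) + 𝔽e_i ⊆ 𝔼_{t_i(B')}`. Every `B ∈ S_D` has at most
`(D+1)/2` intervals and `t_i` adds at most one, so a `B = t_i(B')` of maximal size comes from a
maximal `B'`, and induction gives `η_{D+2} = T_i(η_D) + e_i ∈ 𝔼_B`.
-/

open Finset

lemma e_apply (k m : ℕ) : e k m = if k = m then 1 else 0 := by
  simp [e, Finsupp.single_apply]

def Tpre (i m : ℕ) : ℕ :=
  if m < i then m else if m ≤ i + 1 then i - 1 else m - 2

lemma Tlin_apply {i : ℕ} (hi : 1 ≤ i) (x : Vec) (m : ℕ) : Tlin i x m = x (Tpre i m) := by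
  suffices Finsupp.lapply m ∘ₗ Tlin i = Finsupp.lapply (R := ZMod 2) (Tpre i m) from
    LinearMap.congr_fun this x
  refine Finsupp.lhom_ext fun j b => ?_
  simp only [LinearMap.comp_apply, Finsupp.lapply_apply, Tlin,
    Finsupp.linearCombination_single, Finsupp.smul_apply, Tfun, Tpre, Finsupp.single_apply]
  split_ifs <;> simp only [Finsupp.add_apply, e_apply] <;> split_ifs <;> first | omega | simp

lemma sum_e_apply (s : Finset ℕ) (m : ℕ) : (∑ j ∈ s, e j) m = if m ∈ s then 1 else 0 := by
  simp [Finsupp.finsetSum_apply, e_apply]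

lemma eI_apply (p : ℕ × ℕ) (m : ℕ) : eI p m = if p.1 ≤ m ∧ m ≤ p.2 then 1 else 0 := by
  simp [eI, sum_e_apply]

lemma eta_apply (D m : ℕ) : eta D m = if m % 2 = 1 ∧ 1 ≤ m ∧ m ≤ D then 1 else 0 := by
  simp [eta, sum_e_apply, and_comm, and_assoc]

lemma Tlin_eI {i : ℕ} (hi : 1 ≤ i) (p : ℕ × ℕ) : Tlin i (eI p) = eI (tint i p) := by
  ext m
  simp only [Tlin_apply hi, eI_apply, Tpre, tint]
  split_ifs <;> first | rfl | omega

lemma eta_add_two {D i : ℕ} (hD : Odd D) (hi₁ : 1 ≤ i) (hi₂ : i ≤ D + 2) :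
    eta (D + 2) = Tlin i (eta D) + e i := by
  rw [Nat.odd_iff] at hD
  ext m
  simp only [Finsupp.add_apply, Tlin_apply hi₁, eta_apply, Tpre, e_apply]
  split_ifs <;> first | rfl | decide | omega

lemma map_Tlin_EB_le {i : ℕ} (hi : 1 ≤ i) (B : Finset (ℕ × ℕ)) :
    (EB B).map (Tlin i) ≤ EB (tmap i B) := by
  rw [EB, Submodule.map_span]
  refine Submodule.span_mono ?_
  rintro _ ⟨_, ⟨p, hp, rfl⟩, rfl⟩
  exact ⟨tint i p, mem_coe.2 (mem_union_left _ (mem_image_of_mem _ hp)), (Tlin_eI hi p).symm⟩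

lemma e_mem_EB_tmap (i : ℕ) (B : Finset (ℕ × ℕ)) : e i ∈ EB (tmap i B) :=
  Submodule.subset_span ⟨(i, i), by simp [tmap], by simp [eI]⟩

lemma card_tmap_le (i : ℕ) (B : Finset (ℕ × ℕ)) : (tmap i B).card ≤ B.card + 1 :=
  (card_union_le _ _).trans (by simpa using card_image_le)

lemma IsS.card_le {D : ℕ} {B : Finset (ℕ × ℕ)} (hB : IsS D B) : B.card ≤ (D + 1) / 2 := by
  induction hB with
  | empty => simp
  | one => simp
  | step D i B' _ _ _ ih => have := card_tmap_le i B'; omega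

/-- `D` odd, `B ∈ S_D`, `|B| = (D+1)/2` implies `η_D ∈ 𝔼_B`. -/
theorem stmt8 (D : ℕ) (hD : Odd D) (B : Finset (ℕ × ℕ)) (hB : IsS D B)
    (h : B.card = (D + 1) / 2) : eta D ∈ EB B := by
  induction hB with
  | empty D =>
    obtain ⟨k, rfl⟩ := hD
    rw [card_empty] at h
    omega
  | one =>
    have h_eta : eta 1 = eI (1, 1) := by
      ext m
      simp only [eta_apply, eI_apply]
      split_ifs <;> first | rfl | omega
    exact h_eta ▸ Submodule.subset_span ⟨(1, 1), by simp, rfl⟩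
  | step D i B' hi₁ hi₂ hB' ih =>
    have hD' : Odd D := by simpa [Nat.odd_add] using hD
    have hB'_card : B'.card = (D + 1) / 2 := by
      have := hB'.card_le; have := card_tmap_le i B'; omega
    rw [eta_add_two hD' hi₁ hi₂]
    exact add_mem (map_Tlin_EB_le hi₁ B' ⟨_, ih hD' hB'_card, rfl⟩) (e_mem_EB_tmap i B')
end

section
/- For D ≥ 2 and i ∈ [1,D], the injective linear map T_i : V_{D-2} → V_D preserves the symplectic form: (T_i(x), T_i(y)) = (x, y) for all x, y ∈ V_{D-2}. -/
open Finset

/-! Both sides are bilinear in `(x, y)`, so it suffices to compare them on basis vectors, where it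
is a finite check of adjacencies: `T_i` shifts the indices `≥ i` by two and sends `e_{i-1}` to
`e_{i-1} + e_i + e_{i+1}`, whose outer terms are adjacent exactly to `T_i e_{i-2} = e_{i-2}` and
`T_i e_i = e_{i+2}`. -/

lemma symp_add_left (x x' y : Vec) : symp (x + x') y = symp x y + symp x' y :=
  Finsupp.sum_add_index (fun _ _ ↦ zero_mul _) fun _ _ _ _ ↦ add_mul _ _ _

lemma symp_smul_left (c : ZMod 2) (x y : Vec) : symp (c • x) y = c • symp x y := by
  rw [symp, Finsupp.sum_smul_index fun _ ↦ zero_mul _, symp, Finsupp.smul_sum]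
  simp only [smul_eq_mul, mul_assoc]

lemma symp_add_right (x y y' : Vec) : symp x (y + y') = symp x y + symp x y' := by
  rw [symp, symp, symp, ← Finsupp.sum_add]
  refine Finsupp.sum_congr fun i _ ↦ ?_
  simp only [Finsupp.add_apply]
  split_ifs <;> ring

lemma symp_smul_right (c : ZMod 2) (x y : Vec) : symp x (c • y) = c • symp x y := by
  rw [symp, symp, Finsupp.smul_sum]
  refine Finsupp.sum_congr fun i _ ↦ ?_
  simp only [Finsupp.smul_apply, smul_eq_mul]
  split_ifs <;> ring

noncomputable def sympForm : LinearMap.BilinForm (ZMod 2) Vec :=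
  LinearMap.mk₂ (ZMod 2) symp symp_add_left symp_smul_left symp_add_right symp_smul_right

lemma symp_e_e (a b : ℕ) : symp (e a) (e b) = if a + 1 = b ∨ b + 1 = a then 1 else 0 := by
  rw [symp, e, Finsupp.sum_single_index (by simp)]
  simp only [e, Finsupp.single_apply, one_mul]
  split_ifs <;> first | decide | omega

lemma Tlin_e (i k : ℕ) : Tlin i (e k) = Tfun i k := by
  rw [Tlin, e, Finsupp.linearCombination_single, one_smul]

lemma symp_Tfun_Tfun (i k l : ℕ) : symp (Tfun i k) (Tfun i l) = symp (e k) (e l) := by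
  unfold Tfun
  split_ifs <;> simp only [symp_add_left, symp_add_right, symp_e_e] <;> split_ifs <;>
    first | decide | omega

theorem stmt15_general (i : ℕ) (x y : Vec) :
    symp (Tlin i x) (Tlin i y) = symp x y := by
  have h : sympForm.compl₁₂ (Tlin i) (Tlin i) = sympForm :=
    LinearMap.ext_basis Finsupp.basisSingleOne Finsupp.basisSingleOne fun k l ↦ by
      change symp (Tlin i (e k)) (Tlin i (e l)) = symp (e k) (e l)
      rw [Tlin_e, Tlin_e, symp_Tfun_Tfun]
  exact LinearMap.congr_fun₂ h x y

/-- `T_i : V_{D-2} → V_D` preserves the symplectic form. -/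
theorem stmt15 (D i : ℕ) (hD : 2 ≤ D) (h1 : 1 ≤ i) (h2 : i ≤ D)
    (x y : Vec) (hx : x ∈ VD (D - 2)) (hy : y ∈ VD (D - 2)) :
    symp (Tlin i x) (Tlin i y) = symp x y :=
  stmt15_general i x y
end
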